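/- For every n ≥ 1, the number of league outcomes with n teams in which every team has total points exactly 3(n−1) equals the number of loopless digraphs on Fin n in which every vertex has its in-degree equal to its out-degree (labeled Eulerian digraphs on n nodes). -/

import Mathlib

open Finset

inductive MatchResult : Type
  | homeWin : MatchResult
  | draw : MatchResult
  | awayWin : MatchResult
  deriving DecidableEq

instance : Fintype MatchResult :=
  ⟨{MatchResult.homeWin, MatchResult.draw, MatchResult.awayWin}, fun x => by cases x <;> decide⟩

/-- A league outcome: a result for each ordered pair of distinct teams
(the first component is the home team). -/
abbrev LeagueOutcome (n : ℕ) : Type :=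
  {p : Fin n × Fin n // p.1 ≠ p.2} → MatchResult

/-- Points earned by the home team. -/
def homePts : MatchResult → ℕ
  | .homeWin => 3
  | .draw => 1
  | .awayWin => 0

/-- Points earned by the away team. -/
def awayPts : MatchResult → ℕ
  | .homeWin => 0
  | .draw => 1
  | .awayWin => 3

/-- Total points of team `i`: sum over all matches of the points `i` earns in them. -/
def totalPoints {n : ℕ} (r : LeagueOutcome n) (i : Fin n) : ℕ :=
  ∑ m : {p : Fin n × Fin n // p.1 ≠ p.2},
    ((if m.val.1 = i then homePts (r m) else 0) +
     (if m.val.2 = i then awayPts (r m) else 0))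

/-- Total points the other teams earn in their matches against team `i`. -/
def oppPoints {n : ℕ} (r : LeagueOutcome n) (i : Fin n) : ℕ :=
  ∑ m : {p : Fin n × Fin n // p.1 ≠ p.2},
    ((if m.val.1 = i then awayPts (r m) else 0) +
     (if m.val.2 = i then homePts (r m) else 0))

/-- Number of matches that team `i` wins. -/
def wins {n : ℕ} (r : LeagueOutcome n) (i : Fin n) : ℕ :=
  (Finset.univ.filter (fun m : {p : Fin n × Fin n // p.1 ≠ p.2} =>
    (m.val.1 = i ∧ r m = .homeWin) ∨ (m.val.2 = i ∧ r m = .awayWin))).card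

/-- Number of matches that team `i` draws. -/
def draws {n : ℕ} (r : LeagueOutcome n) (i : Fin n) : ℕ :=
  (Finset.univ.filter (fun m : {p : Fin n × Fin n // p.1 ≠ p.2} =>
    (m.val.1 = i ∨ m.val.2 = i) ∧ r m = .draw)).card

/-- Number of matches that team `i` loses. -/
def losses {n : ℕ} (r : LeagueOutcome n) (i : Fin n) : ℕ :=
  (Finset.univ.filter (fun m : {p : Fin n × Fin n // p.1 ≠ p.2} =>
    (m.val.1 = i ∧ r m = .awayWin) ∨ (m.val.2 = i ∧ r m = .homeWin))).card

/-!
Summed over the teams, the points of an outcome are those awarded in its `n(n-1)` matches, at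
most 3 per match and only 2 for a draw. If every team scores `3(n-1)` the total is `3n(n-1)`, so
there are no draws. A draw-free outcome is a loopless digraph, with an arc `a → h` when `a` wins
away at `h`. Team `i` then wins `(n-1) - indeg i` home matches and `outdeg i` away matches, so it
scores `3(n-1)` exactly when its two degrees agree.
-/

section

variable {n : ℕ}

lemma sum_matches (f : Fin n → Fin n → ℕ) :
    ∑ m : {p : Fin n × Fin n // p.1 ≠ p.2}, f m.1.1 m.1.2 = ∑ a, ∑ b ∈ univ.erase a, f a b := by
  rw [← Finset.sum_subtype (univ.filter fun p : Fin n × Fin n => p.1 ≠ p.2) (by simp)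
    (fun p => f p.1 p.2), Finset.sum_filter, Fintype.sum_prod_type]
  simp only [Finset.sum_ite, Finset.sum_const_zero, add_zero, Finset.filter_ne]

lemma card_matches : Fintype.card {p : Fin n × Fin n // p.1 ≠ p.2} = n * (n - 1) := by
  simpa using sum_matches (n := n) fun _ _ => 1

lemma sum_matches_home (f : Fin n → Fin n → ℕ) (i : Fin n) :
    ∑ m : {p : Fin n × Fin n // p.1 ≠ p.2}, (if m.1.1 = i then f m.1.1 m.1.2 else 0) =
      ∑ j ∈ univ.erase i, f i j := by
  rw [sum_matches (fun a b => if a = i then f a b else 0)]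
  simp

lemma sum_matches_away (f : Fin n → Fin n → ℕ) (i : Fin n) :
    ∑ m : {p : Fin n × Fin n // p.1 ≠ p.2}, (if m.1.2 = i then f m.1.1 m.1.2 else 0) =
      ∑ j ∈ univ.erase i, f j i := by
  rw [sum_matches (fun a b => if b = i then f a b else 0)]
  simp [Finset.sum_ite, Finset.filter_ne]

lemma sum_totalPoints (r : LeagueOutcome n) :
    ∑ i, totalPoints r i = ∑ m, (homePts (r m) + awayPts (r m)) := by
  simp only [totalPoints]
  rw [Finset.sum_comm]
  simp [Finset.sum_add_distrib]

lemma homePts_add_awayPts_le (x : MatchResult) : homePts x + awayPts x ≤ 3 := by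
  cases x <;> decide

lemma ne_draw_of_forall_totalPoints_eq {r : LeagueOutcome n}
    (h : ∀ i, totalPoints r i = 3 * (n - 1)) (m : {p : Fin n × Fin n // p.1 ≠ p.2}) :
    r m ≠ .draw := by
  intro hm
  have hlt : ∑ m, (homePts (r m) + awayPts (r m)) < ∑ _m : {p : Fin n × Fin n // p.1 ≠ p.2}, 3 :=
    Finset.sum_lt_sum (fun x _ => homePts_add_awayPts_le (r x))
      ⟨m, Finset.mem_univ m, by simp [hm, homePts, awayPts]⟩
  rw [← sum_totalPoints, Finset.sum_const, Finset.card_univ, card_matches] at hlt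
  simp [h] at hlt
  lia

/-- Arc `a → h` means that `a` won its away match at `h`. -/
def LeagueOutcome.ofDigraph (g : Fin n → Fin n → Bool) : LeagueOutcome n :=
  fun m => if g m.1.2 m.1.1 then .awayWin else .homeWin

lemma totalPoints_ofDigraph {g : Fin n → Fin n → Bool} (hg : ∀ i, g i i = false) (i : Fin n) :
    totalPoints (.ofDigraph g) i + 3 * #{j | g j i = true} =
      3 * (n - 1) + 3 * #{j | g i j = true} := by
  have home (b : Bool) : homePts (if b then .awayWin else .homeWin) = if b then 0 else 3 := by
    cases b <;> rfl
  have away (b : Bool) : awayPts (if b then .awayWin else .homeWin) = if b then 3 else 0 := by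
    cases b <;> rfl
  have three_mul_card (p : Fin n → Bool) (hp : p i = false) :
      3 * #{j | p j = true} = ∑ j ∈ univ.erase i, if p j then 3 else 0 := by
    rw [Finset.sum_erase _ (by simp [hp]), Finset.sum_ite, Finset.sum_const, Finset.sum_const_zero]
    simp [mul_comm]
  simp only [totalPoints, LeagueOutcome.ofDigraph, home, away, Finset.sum_add_distrib]
  rw [sum_matches_home (fun a b => if g b a then 0 else 3),
    sum_matches_away (fun a b => if g b a then 3 else 0),
    three_mul_card (g · i) (hg i), three_mul_card (g i) (hg i), add_right_comm,
    ← Finset.sum_add_distrib,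
    Finset.sum_congr rfl fun j _ => show (if g j i then 0 else 3) + _ = 3 by cases g j i <;> rfl]
  simp [mul_comm]

lemma forall_totalPoints_ofDigraph_iff {g : Fin n → Fin n → Bool} (hg : ∀ i, g i i = false) :
    (∀ i, totalPoints (.ofDigraph g) i = 3 * (n - 1)) ↔
      ∀ A, #{j | g j A = true} = #{j | g A j = true} :=
  forall_congr' fun i => by have := totalPoints_ofDigraph hg i; omega

def LeagueOutcome.awayWinDigraph (r : LeagueOutcome n) : Fin n → Fin n → Bool :=
  fun a h => if hne : h ≠ a then decide (r ⟨(h, a), hne⟩ = .awayWin) else false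

def drawFreeEquivLoopless :
    {r : LeagueOutcome n // ∀ m, r m ≠ .draw} ≃ {g : Fin n → Fin n → Bool // ∀ i, g i i = false} where
  toFun r := ⟨r.1.awayWinDigraph, fun i => by simp [LeagueOutcome.awayWinDigraph]⟩
  invFun g := ⟨.ofDigraph g.1, fun m => by unfold LeagueOutcome.ofDigraph; split <;> simp⟩
  left_inv r := by
    ext m
    have := r.2 m
    simp only [LeagueOutcome.ofDigraph, LeagueOutcome.awayWinDigraph, dif_pos m.2]
    cases h : r.1 m <;> simp_all
  right_inv g := by
    ext a h
    by_cases hne : h = a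
    · simp [LeagueOutcome.awayWinDigraph, hne, g.2]
    · simp [LeagueOutcome.awayWinDigraph, LeagueOutcome.ofDigraph, hne]

end

theorem card_max_score_eq_card_eulerian_general (n : ℕ) :
    Fintype.card {r : LeagueOutcome n // ∀ i, totalPoints r i = 3 * (n - 1)} =
      Fintype.card {g : Fin n → Fin n → Bool //
        (∀ i, g i i = false) ∧
        ∀ A : Fin n,
          (Finset.univ.filter (fun j => g j A = true)).card =
            (Finset.univ.filter (fun j => g A j = true)).card} :=
  Fintype.card_congr <|
    (Equiv.subtypeSubtypeEquivSubtype fun h => ne_draw_of_forall_totalPoints_eq h).symm.trans <|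
    (Equiv.subtypeEquiv drawFreeEquivLoopless.symm fun g =>
      (forall_totalPoints_ofDigraph_iff g.2).symm).symm.trans <|
    Equiv.subtypeSubtypeEquivSubtypeInter _ _

/-- the number of outcomes in which every team has exactly `3(n−1)`
points equals the number of labeled Eulerian loopless digraphs on `Fin n`. -/
theorem card_max_score_eq_card_eulerian (n : ℕ) (hn : 1 ≤ n) :
    Fintype.card {r : LeagueOutcome n // ∀ i, totalPoints r i = 3 * (n - 1)} =
      Fintype.card {g : Fin n → Fin n → Bool //
        (∀ i, g i i = false) ∧
        ∀ A : Fin n,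
          (Finset.univ.filter (fun j => g j A = true)).card =
            (Finset.univ.filter (fun j => g A j = true)).card} :=
  card_max_score_eq_card_eulerian_general n
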